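/- arXiv:1707.06733 — 4 statements merged into one kernel-verified Lean document; each statement's English description precedes it below -/
import Mathlib

section
/- Let R be a 2-dimensional Noetherian regular local domain with maximal ideal M and fraction field L, and let a, b ∈ M be nonzero elements having no common prime factor. Then the kernel of the R-algebra homomorphism R[t] → L from the polynomial ring R[t] determined by t ↦ a/b is the principal prime ideal (bt − a)R[t], and this ideal is contained in M·R[t]. -/
/-!  Subrings of a field `K` are used as the ambient setting: a local domain `R` with
fraction field `K` is represented as a subring of `K` with `IsFractionRing R K`. -/

namespace Dicritical

variable {K : Type*} [Field K]

/-- The set of nonunits of a subring `R` of `K`; when `R` is a local ring this is the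
underlying set of its maximal ideal `m_R`. -/
def mSet (R : Subring K) : Set K := {x | ∃ h : x ∈ R, ¬IsUnit (⟨x, h⟩ : R)}

/-- The ideal of `R` generated by its nonunits; when `R` is a local ring this is its
maximal ideal `m_R`. -/
def mIdeal (R : Subring K) : Ideal R := Ideal.span {a : R | ¬IsUnit a}

/-- `S` (birationally) dominates `R`: `R ⊆ S` and `m_S ∩ R = m_R`. -/
def Dominates (S R : Subring K) : Prop := R ≤ S ∧ mSet R ⊆ mSet S

/-- `R` is a Noetherian regular local ring: local, Noetherian, and the maximal ideal is
generated by (Krull dimension)-many elements. -/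
def IsRegularLocalSubring (R : Subring K) : Prop :=
  IsNoetherianRing R ∧ IsLocalRing R ∧
    ∃ s : Finset R, Ideal.span (s : Set R) = mIdeal R ∧ (s.card : WithBot ℕ∞) = ringKrullDim R

/-- `R` is a `d`-dimensional Noetherian regular local ring. -/
def IsRegularLocalOfDim (d : ℕ) (R : Subring K) : Prop :=
  IsNoetherianRing R ∧ IsLocalRing R ∧ ringKrullDim R = d ∧
    ∃ s : Finset R, Ideal.span (s : Set R) = mIdeal R ∧ s.card = d

/-- The subring `R[m_R / x]` of `K` generated by `R` and the quotients `y/x`, `y ∈ m_R`. -/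
def blowRing (R : Subring K) (x : K) : Subring K :=
  Subring.closure (↑R ∪ {z | ∃ y ∈ mSet R, z = y * x⁻¹})

lemma le_blowRing (R : Subring K) (x : K) : R ≤ blowRing R x :=
  fun _ h => Subring.subset_closure (Or.inl h)

/-- The localization of a subring `A` of `K` at the complement of a subset `Q`
(the prime ideal), as a subset of `K`. -/
def locSet (A : Subring K) (Q : Set K) : Set K :=
  {z | ∃ a ∈ A, ∃ b ∈ A, b ∉ Q ∧ z = a * b⁻¹}

/-- The underlying subset of `K` of an ideal of a subring of `K`. -/
def idealSet (R : Subring K) (I : Ideal R) : Set K := ((↑) : R → K) '' (I : Set R)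

/-- `T` is a first local quadratic transform of `R` (both regarded as subrings of a common
field `K`): `T` is the localization of `A = R[m_R/x]` at a prime `Q` of `A` with
`Q ∩ R = m_R`, for an element `x ∈ m_R` with `m_R·A = x·A`. -/
def IsFirstQuadratic (R T : Subring K) : Prop :=
  ∃ x ∈ mSet R,
    (∀ y ∈ mSet R, ∃ t ∈ blowRing R x, y = x * t) ∧
    ∃ Q : Ideal (blowRing R x), Q.IsPrime ∧
      idealSet _ Q ∩ (R : Set K) = mSet R ∧
      (T : Set K) = locSet (blowRing R x) (idealSet _ Q)

end Dicritical

/-!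
A minimal prime `P` over an irreducible `q` has height at most one (Krull's principal ideal
theorem), so it misses one of the two generators of `m`, say `x`. The same height count shows
that `(x)` is prime, so `R/(x)` is a local domain with principal maximal ideal, hence a principal
ideal ring. Lifting a generator of the image of `P` and applying Nakayama makes `P` principal,
generated by a prime `u` associated to `q`; thus `R` is a UFD. There `b t - a` is primitive, and
it generates the kernel after extension to the fraction field, so by Gauss's lemma it generates
the kernel over `R`.
-/

open IsLocalRing Ideal

namespace IsLocalRing

variable {R : Type*} [CommRing R] [IsNoetherianRing R] [IsLocalRing R]

-- Writing `v ∈ P` as `j + t * e`, primality forces `e ∈ P`, so `P ≤ J ⊔ t • P`: Nakayama.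
theorem le_of_isPrime_of_le_sup_span_singleton {P J : Ideal R} (hP : P.IsPrime) {t : R}
    (ht : t ∈ maximalIdeal R) (htP : t ∉ P) (hJP : J ≤ P) (h : P ≤ J ⊔ span {t}) :
    P ≤ J := by
  refine Submodule.le_of_le_smul_of_le_jacobson_bot (IsNoetherian.noetherian P)
    ((span_singleton_le_iff_mem _).mpr ht |>.trans (maximalIdeal_le_jacobson ⊥)) fun v hv ↦ ?_
  obtain ⟨j, hj, w, hw, rfl⟩ := Submodule.mem_sup.mp (h hv)
  obtain ⟨e, rfl⟩ := mem_span_singleton'.mp hw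
  have he : e ∈ P := (hP.mem_or_mem (by simpa using P.sub_mem hv (hJP hj))).resolve_right htP
  rw [mul_comm]
  exact Submodule.add_mem_sup hj (Submodule.smul_mem_smul (mem_span_singleton_self t) he)

theorem eq_span_singleton_of_isPrime_of_mem {x y : R} (hm : maximalIdeal R = span {x, y})
    {P : Ideal R} (hP : P.IsPrime) (hxP : x ∈ P) (hPm : P ≠ maximalIdeal R) :
    P = span {x} := by
  have hPle : P ≤ maximalIdeal R := le_maximalIdeal hP.ne_top
  have hyP : y ∉ P := fun hyP ↦ hPm <| hPle.antisymm <| by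
    rw [hm, span_le, Set.insert_subset_iff, Set.singleton_subset_iff]
    exact ⟨hxP, hyP⟩
  refine le_antisymm (le_of_isPrime_of_le_sup_span_singleton hP ?_ hyP ?_ ?_) ?_
  · exact hm ▸ subset_span (by simp)
  · exact (span_singleton_le_iff_mem _).mpr hxP
  · rw [← span_insert, ← hm]; exact hPle
  · exact (span_singleton_le_iff_mem _).mpr hxP

theorem ne_maximalIdeal_of_mem_minimalPrimes (hdim : 1 < ringKrullDim R) {q : R} {P : Ideal R}
    (hP : P ∈ (span {q}).minimalPrimes) : P ≠ maximalIdeal R := by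
  rintro rfl
  have h1 : ((maximalIdeal R).height : WithBot ℕ∞) ≤ 1 := by
    exact_mod_cast height_le_one_of_isPrincipal_of_mem_minimalPrimes _ _ hP
  rw [maximalIdeal_height_eq_ringKrullDim] at h1
  exact h1.not_gt hdim

theorem isPrime_span_singleton_of_maximalIdeal_eq (hdim : 1 < ringKrullDim R) {x y : R}
    (hm : maximalIdeal R = span {x, y}) : (span {x}).IsPrime := by
  have hxm : span {x} ≤ maximalIdeal R :=
    (span_singleton_le_iff_mem _).mpr (hm ▸ subset_span (by simp))
  obtain ⟨P, hPmin, -⟩ := exists_minimalPrimes_le hxm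
  rw [← eq_span_singleton_of_isPrime_of_mem hm hPmin.1.1 (hPmin.1.2 (mem_span_singleton_self x))
    (ne_maximalIdeal_of_mem_minimalPrimes hdim hPmin)]
  exact hPmin.1.1

theorem isPrincipalIdealRing_quotient_span_singleton (hdim : 1 < ringKrullDim R) {x y : R}
    (hm : maximalIdeal R = span {x, y}) : IsPrincipalIdealRing (R ⧸ span {x}) := by
  have : IsDomain (R ⧸ span {x}) :=
    (Quotient.isDomain_iff_prime _).mpr (isPrime_span_singleton_of_maximalIdeal_eq hdim hm)
  have : IsLocalRing (R ⧸ span {x}) := .of_surjective' _ Ideal.Quotient.mk_surjective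
  have hmax : maximalIdeal (R ⧸ span {x}) = span {Ideal.Quotient.mk _ y} := by
    rw [← map_maximalIdeal_of_surjective _ Ideal.Quotient.mk_surjective, hm, map_span,
      Set.image_pair, Quotient.eq_zero_iff_mem.mpr (mem_span_singleton_self x), span_insert_zero]
  refine ⟨fun I ↦ ?_⟩
  rcases eq_or_ne I ⊥ with rfl | hI
  · exact bot_isPrincipal
  obtain ⟨n, rfl⟩ := exists_maximalIdeal_pow_eq_of_principal _ ⟨_, hmax⟩ I hI
  exact ⟨_, by rw [hmax, span_singleton_pow]⟩

theorem isPrincipal_of_isPrime_of_notMem {x : R} (hx : x ∈ maximalIdeal R)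
    [IsPrincipalIdealRing (R ⧸ span {x})] {P : Ideal R} (hP : P.IsPrime) (hxP : x ∉ P) :
    P.IsPrincipal := by
  obtain ⟨g, hg : P.map (Ideal.Quotient.mk (span {x})) = span {g}⟩ :=
    IsPrincipalIdealRing.principal (P.map (Ideal.Quotient.mk (span {x})))
  obtain ⟨u, huP, rfl⟩ := (mem_map_iff_of_surjective _ Ideal.Quotient.mk_surjective).mp
    (hg ▸ mem_span_singleton_self g : g ∈ P.map (Ideal.Quotient.mk (span {x})))
  have hsup : P ≤ span {u} ⊔ span {x} := by
    calc P ≤ comap (Ideal.Quotient.mk (span {x})) (P.map (Ideal.Quotient.mk _)) := le_comap_map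
      _ = span {u} ⊔ span {x} := by
        rw [hg, ← Set.image_singleton, ← map_span,
          comap_map_of_surjective _ Ideal.Quotient.mk_surjective, ← RingHom.ker_eq_comap_bot,
          mk_ker]
  have huP' : span {u} ≤ P := (span_singleton_le_iff_mem _).mpr huP
  exact ⟨u, le_antisymm (le_of_isPrime_of_le_sup_span_singleton hP hx hxP huP' hsup) huP'⟩

theorem prime_of_irreducible [IsDomain R] (hdim : 1 < ringKrullDim R) {x y : R}
    (hm : maximalIdeal R = span {x, y}) {q : R} (hq : Irreducible q) : Prime q := by
  obtain ⟨P, hPmin, -⟩ := exists_minimalPrimes_le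
    ((span_singleton_le_iff_mem _).mpr ((mem_maximalIdeal q).mpr hq.not_isUnit))
  have hP : P.IsPrime := hPmin.1.1
  have hxy : x ∉ P ∨ y ∉ P := by
    by_contra! h
    refine ne_maximalIdeal_of_mem_minimalPrimes hdim hPmin <|
      (le_maximalIdeal hP.ne_top).antisymm ?_
    rw [hm, span_le, Set.insert_subset_iff, Set.singleton_subset_iff]
    exact h
  obtain ⟨u, hu : P = span {u}⟩ : P.IsPrincipal := by
    rcases hxy with hx | hy
    · have := isPrincipalIdealRing_quotient_span_singleton hdim hm
      exact isPrincipal_of_isPrime_of_notMem (hm ▸ subset_span (by simp)) hP hx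
    · rw [span_pair_comm] at hm
      have := isPrincipalIdealRing_quotient_span_singleton hdim hm
      exact isPrincipal_of_isPrime_of_notMem (hm ▸ subset_span (by simp)) hP hy
  have huq : u ∣ q := mem_span_singleton.mp (hu ▸ hPmin.1.2 (mem_span_singleton_self q))
  have hu0 : u ≠ 0 := by rintro rfl; exact hq.ne_zero (zero_dvd_iff.mp huq)
  have hu : Prime u := (span_singleton_prime hu0).mp (hu ▸ hP)
  exact (hu.irreducible.associated_of_dvd hq huq).prime hu

theorem uniqueFactorizationMonoid [IsDomain R] (hdim : 1 < ringKrullDim R) {x y : R}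
    (hm : maximalIdeal R = span {x, y}) : UniqueFactorizationMonoid R :=
  { (inferInstance : WfDvdMonoid R) with
    irreducible_iff_prime := ⟨prime_of_irreducible hdim hm, Prime.irreducible⟩ }

end IsLocalRing

namespace Polynomial

theorem isPrimitive_C_mul_X_sub_C {R : Type*} [CommRing R] {a b : R} (hab : IsRelPrime a b) :
    (C b * X - C a).IsPrimitive := by
  intro r hr
  rw [C_dvd_iff_dvd_coeff] at hr
  have h0 := hr 0
  have h1 := hr 1
  simp only [coeff_sub, mul_coeff_zero, coeff_C_zero, coeff_X_zero, mul_zero, zero_sub, dvd_neg,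
    coeff_mul_X, coeff_C_succ, sub_zero] at h0 h1
  exact hab h0 h1

theorem ker_eval₂RingHom_div_eq_span {R K : Type*} [CommRing R] [IsDomain R] [IsGCDMonoid R]
    [Field K] [Algebra R K] [IsFractionRing R K] {a b : R} (hb : b ≠ 0) (hab : IsRelPrime a b) :
    RingHom.ker (eval₂RingHom (algebraMap R K) (algebraMap R K a / algebraMap R K b)) =
      Ideal.span {C b * X - C a} := by
  have hb' : algebraMap R K b ≠ 0 := (map_ne_zero_iff _ (IsFractionRing.injective R K)).mpr hb
  have hmap : (C b * X - C a).map (algebraMap R K) =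
      C (algebraMap R K b) * (X - C (algebraMap R K a / algebraMap R K b)) := by
    rw [mul_sub, ← C_mul, mul_div_cancel₀ _ hb']
    simp
  ext f
  rw [RingHom.mem_ker, coe_eval₂RingHom, Ideal.mem_span_singleton,
    (isPrimitive_C_mul_X_sub_C hab).dvd_iff_fraction_map_dvd_fraction_map K, hmap,
    (isUnit_C.mpr hb'.isUnit).mul_left_dvd, dvd_iff_isRoot, IsRoot, eval_map]

end Polynomial

theorem Dicritical.mIdeal_eq_maximalIdeal {K : Type*} [Field K] (R : Subring K) [IsLocalRing R] :
    Dicritical.mIdeal R = maximalIdeal R :=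
  span_eq (maximalIdeal R)

open Dicritical Polynomial in
theorem stmt5_general {K : Type*} [Field K] (R : Subring K) [IsFractionRing R K]
    (hR : IsRegularLocalOfDim 2 R) (a b : R)
    (ha : a ∈ mIdeal R) (hb : b ∈ mIdeal R) (hb0 : b ≠ 0)
    (hcop : ∀ p : R, p ∣ a → p ∣ b → IsUnit p) :
    RingHom.ker (eval₂RingHom (algebraMap R K) ((a : K) / (b : K))) =
      Ideal.span {C b * X - C a} ∧
    (Ideal.span {C b * X - C a} : Ideal (Polynomial R)).IsPrime ∧
    RingHom.ker (eval₂RingHom (algebraMap R K) ((a : K) / (b : K))) ≤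
      Ideal.map (C : R →+* Polynomial R) (mIdeal R) := by
  classical
  obtain ⟨_, _, hdim, s, hspan, hcard⟩ := hR
  obtain ⟨x, y, -, rfl⟩ := Finset.card_eq_two.mp hcard
  have hm : maximalIdeal R = span {x, y} := by
    rw [← mIdeal_eq_maximalIdeal, ← hspan]
    simp
  have := IsLocalRing.uniqueFactorizationMonoid (by rw [hdim]; norm_num) hm
  have hker := ker_eval₂RingHom_div_eq_span (K := K) hb0 hcop
  refine ⟨hker, hker ▸ RingHom.ker_isPrime _, hker ▸ span_le.mpr ?_⟩
  rw [Set.singleton_subset_iff]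
  exact sub_mem (mul_mem_right _ _ (mem_map_of_mem C hb)) (mem_map_of_mem C ha)

open Dicritical Polynomial in
/-- for a 2-dimensional Noetherian regular local domain `R` with fraction
field `K` and nonzero `a, b ∈ m_R` with no common prime factor, the kernel of the `R`-algebra
map `R[t] → K`, `t ↦ a/b`, is the principal prime ideal `(b·t − a)R[t]`, which is contained
in `m_R·R[t]`. -/
theorem stmt5 {K : Type*} [Field K] (R : Subring K) [IsFractionRing R K]
    (hR : IsRegularLocalOfDim 2 R) (a b : R)
    (ha : a ∈ mIdeal R) (hb : b ∈ mIdeal R) (ha0 : a ≠ 0) (hb0 : b ≠ 0)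
    (hcop : ∀ p : R, p ∣ a → p ∣ b → IsUnit p) :
    RingHom.ker (eval₂RingHom (algebraMap R K) ((a : K) / (b : K))) =
      Ideal.span {C b * X - C a} ∧
    (Ideal.span {C b * X - C a} : Ideal (Polynomial R)).IsPrime ∧
    RingHom.ker (eval₂RingHom (algebraMap R K) ((a : K) / (b : K))) ≤
      Ideal.map (C : R →+* Polynomial R) (mIdeal R) :=
  stmt5_general R hR a b ha hb hb0 hcop
end

section
/- Let k be a field, let m and n be positive integers with gcd(m, n) = 1, and let f = X^m Y^n ∈ k[X, Y]. Then f is not a ring generator of k[X, Y]: there is no polynomial g ∈ k[X, Y] such that the k-subalgebra of k[X, Y] generated by f and g equals k[X, Y]. -/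
/-!
Put `A = k[X, Y] ⧸ (X^m Y^n)`. If `k[f, g] = k[X, Y]`, then `A` is generated by the image `a` of
`g`. Were `a` algebraic over `k`, all of `A` would be algebraic; but the images `x, y` of `X, Y`
are transcendental (send the other variable to `0`, which kills `X^m Y^n`). So `k[t] → A, t ↦ a`
is an isomorphism and `A` is a domain, contradicting `x^m y^n = 0` with `x, y ≠ 0`.
-/

open Polynomial

theorem Algebra.adjoin_singleton_mk_eq_top_of_adjoin_pair_eq_top {R A : Type*} [CommSemiring R]
    [CommRing A] [Algebra R A] {f g : A} (h : Algebra.adjoin R {f, g} = ⊤) :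
    Algebra.adjoin R {Ideal.Quotient.mk (Ideal.span {f}) g} = ⊤ := by
  let π := Ideal.Quotient.mkₐ R (Ideal.span {f})
  have hf : π f = 0 := Ideal.Quotient.eq_zero_iff_mem.2 (Ideal.mem_span_singleton_self f)
  have hπ : (⊤ : Subalgebra R A).map π = ⊤ := by
    rw [Algebra.map_top, AlgHom.range_eq_top]
    exact Ideal.Quotient.mkₐ_surjective R _
  rw [← hπ, ← h, ← Algebra.adjoin_image, Set.image_pair, hf, Algebra.adjoin_insert_zero]
  rfl

theorem transcendental_of_adjoin_singleton_eq_top {R A : Type*} [CommRing R] [IsDomain R]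
    [CommRing A] [Algebra R A] {a b : A} (ha : Algebra.adjoin R {a} = ⊤)
    (hb : Transcendental R b) : Transcendental R a := by
  intro halg
  have hA : (Algebra.adjoin R {a}).IsAlgebraic :=
    Algebra.isAlgebraic_adjoin_iff.2 (by simpa using halg)
  rw [ha] at hA
  exact hb (hA b trivial)

theorem isDomain_of_adjoin_singleton_eq_top {R A : Type*} [CommRing R] [IsDomain R]
    [CommRing A] [Algebra R A] {a b : A} (ha : Algebra.adjoin R {a} = ⊤)
    (hb : Transcendental R b) : IsDomain A := by
  have hinj := transcendental_iff_injective.1 (transcendental_of_adjoin_singleton_eq_top ha hb)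
  have hsurj : Function.Surjective (aeval a : R[X] →ₐ[R] A) := by
    rwa [← AlgHom.range_eq_top, ← Algebra.adjoin_singleton_eq_range_aeval]
  let e := AlgEquiv.ofBijective _ ⟨hinj, hsurj⟩
  exact e.symm.injective.isDomain (e.symm : A →+* R[X])

theorem transcendental_mk_X {σ R : Type*} [CommRing R] [DecidableEq σ]
    {f : MvPolynomial σ R} (i : σ) (hf : MvPolynomial.aeval (Pi.single i X : σ → R[X]) f = 0) :
    Transcendental R (Ideal.Quotient.mk (Ideal.span {f}) (MvPolynomial.X i)) := by
  rw [transcendental_iff_injective, injective_iff_map_eq_zero]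
  intro q hq
  rw [← Ideal.Quotient.mkₐ_eq_mk R, aeval_algHom_apply, Ideal.Quotient.mkₐ_eq_mk,
    Ideal.Quotient.eq_zero_iff_mem, Ideal.mem_span_singleton] at hq
  let φ : MvPolynomial σ R →ₐ[R] R[X] := MvPolynomial.aeval (Pi.single i X)
  simpa [φ, hf, ← aeval_algHom_apply] using _root_.map_dvd φ hq

open MvPolynomial in
theorem stmt10_general (k : Type*) [Field k] (m n : ℕ) (hm : 0 < m) (hn : 0 < n) :
    ¬ ∃ g : MvPolynomial (Fin 2) k,
        Algebra.adjoin k {(X 0 : MvPolynomial (Fin 2) k) ^ m * X 1 ^ n, g} = ⊤ := by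
  rintro ⟨g, hg⟩
  set f : MvPolynomial (Fin 2) k := X 0 ^ m * X 1 ^ n
  have hx := transcendental_mk_X (f := f) 0 (by simp [f, zero_pow hn.ne'])
  have hy := transcendental_mk_X (f := f) 1 (by simp [f, zero_pow hm.ne'])
  have := isDomain_of_adjoin_singleton_eq_top
    (Algebra.adjoin_singleton_mk_eq_top_of_adjoin_pair_eq_top hg) hx
  have hxy : Ideal.Quotient.mk (Ideal.span {f}) (X 0) ^ m * Ideal.Quotient.mk _ (X 1) ^ n = 0 := by
    rw [← map_pow, ← map_pow, ← map_mul, Ideal.Quotient.eq_zero_iff_mem]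
    exact Ideal.mem_span_singleton_self f
  rcases mul_eq_zero.1 hxy with h | h
  · exact hx (eq_zero_of_pow_eq_zero h ▸ isAlgebraic_zero)
  · exact hy (eq_zero_of_pow_eq_zero h ▸ isAlgebraic_zero)

open MvPolynomial in
/-- Example 2.515: for coprime positive integers `m, n`, the polynomial
`f = X^m Y^n` is not a ring generator of `k[X, Y]`: there is no `g` with `k[f, g] = k[X, Y]`. -/
theorem stmt10 (k : Type*) [Field k] (m n : ℕ) (hm : 0 < m) (hn : 0 < n)
    (hmn : Nat.gcd m n = 1) :
    ¬ ∃ g : MvPolynomial (Fin 2) k,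
        Algebra.adjoin k {(X 0 : MvPolynomial (Fin 2) k) ^ m * X 1 ^ n, g} = ⊤ :=
  stmt10_general k m n hm hn
end

section
/- Let R be a d-dimensional Noetherian regular local domain with d ≥ 2, maximal ideal m, and fraction field L. Let x ∈ m \ m², and let S = R[m/x] be the subring of L generated by R and the elements y/x for y ∈ m. Let K be an ideal of R that is contracted from S, i.e., K = (K·S) ∩ R. If f ∈ R and x·f ∈ K, then g·f ∈ K for every g ∈ m. -/
/-!
For `g ∈ m` the fraction `g/x` lies in `S = R[m/x]`, so `g·f = (g/x)·(x·f) ∈ K·S`; as `K` is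
contracted from `S`, `g·f ∈ (K·S) ∩ R = K`.
-/

namespace Dicritical

variable {K : Type*} [Field K]

lemma coe_mul_inv_mem_blowRing {R : Subring K} (x : K) {y : R} (hy : y ∈ mIdeal R) :
    (y : K) * x⁻¹ ∈ blowRing R x := by
  induction hy using Submodule.span_induction with
  | mem a ha => exact Subring.subset_closure (Or.inr ⟨a, ⟨a.2, ha⟩, rfl⟩)
  | zero => simp [zero_mem]
  | add a b _ _ ha hb => simpa only [Subring.coe_add, add_mul] using add_mem ha hb
  | smul r a _ ha =>
    simpa only [smul_eq_mul, Subring.coe_mul, mul_assoc] using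
      mul_mem (le_blowRing R x r.2) ha

lemma inclusion_dvd_blowRing {R : Subring K} {x : R} (hx : (x : K) ≠ 0) {g : R}
    (hg : g ∈ mIdeal R) (f : R) :
    Subring.inclusion (le_blowRing R x) (x * f) ∣ Subring.inclusion (le_blowRing R x) (g * f) :=
  ⟨⟨g * (x : K)⁻¹, coe_mul_inv_mem_blowRing _ hg⟩, Subtype.ext <| by
    simp only [Subring.coe_inclusion, Subring.coe_mul]
    field_simp⟩

end Dicritical

open Dicritical in
theorem stmt14_general {L : Type*} [Field L] (R : Subring L)
    (x : R) (hx2 : x ∉ (mIdeal R) ^ 2)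
    (I : Ideal R)
    (hcontr : I = Ideal.comap (Subring.inclusion (le_blowRing R (x : L)))
      (Ideal.map (Subring.inclusion (le_blowRing R (x : L))) I))
    (f : R) (hf : x * f ∈ I) :
    ∀ g ∈ mIdeal R, g * f ∈ I := by
  intro g hg
  have hx0 : (x : L) ≠ 0 := fun h => hx2 <| by
    rw [show x = 0 from Subtype.ext h]
    exact zero_mem _
  rw [hcontr, Ideal.mem_comap]
  exact Ideal.mem_of_dvd _ (inclusion_dvd_blowRing hx0 hg f) (Ideal.mem_map_of_mem _ hf)

open Dicritical in
/-- Proposition, contracted ideals: let `R` be a `d`-dimensional Noetherian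
regular local domain (`d ≥ 2`), `x ∈ m \ m²`, and `S = R[m/x]`.  If `K` is an ideal of `R`
contracted from `S` and `x·f ∈ K`, then `g·f ∈ K` for every `g ∈ m`. -/
theorem stmt14 {L : Type*} [Field L] (R : Subring L) [IsFractionRing R L]
    (d : ℕ) (hd : 2 ≤ d) (hR : IsRegularLocalOfDim d R)
    (x : R) (hx : x ∈ mIdeal R) (hx2 : x ∉ (mIdeal R) ^ 2)
    (I : Ideal R)
    (hcontr : I = Ideal.comap (Subring.inclusion (le_blowRing R (x : L)))
      (Ideal.map (Subring.inclusion (le_blowRing R (x : L))) I))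
    (f : R) (hf : x * f ∈ I) :
    ∀ g ∈ mIdeal R, g * f ∈ I :=
  stmt14_general R x hx2 I hcontr f hf
end

section
/- Let R be a 2-dimensional Noetherian regular local domain whose maximal ideal is generated by a regular system of parameters x, y. For a positive integer N, let B(n) = n(n+1)/2, let I_N = ∏_{j=1}^{N} (y, x^j)R, and define F_N = Σ_{0 ≤ p ≤ ⌊(N−1)/2⌋} x^{B(2p+1)} y^{N−1−2p} and G_N = Σ_{0 ≤ p ≤ ⌊N/2⌋} x^{B(2p)} y^{N−2p}. Then the 2-generated ideal J_N = (F_N, G_N)R is a reduction of I_N: J_N ⊆ I_N and there exists a nonnegative integer n with J_N·I_N^n = I_N^{n+1}. -/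
namespace Dicritical

/-- `B(n) = n(n+1)/2`. -/
def B (n : ℕ) : ℕ := n * (n + 1) / 2

variable {R : Type*} [CommRing R]

/-- `F_N = Σ_{0 ≤ p ≤ ⌊(N−1)/2⌋} x^{B(2p+1)} y^{N−1−2p}`. -/
def Fpoly (x y : R) (N : ℕ) : R :=
  ∑ p ∈ Finset.range ((N - 1) / 2 + 1), x ^ B (2 * p + 1) * y ^ (N - 1 - 2 * p)

/-- `G_N = Σ_{0 ≤ p ≤ ⌊N/2⌋} x^{B(2p)} y^{N−2p}`. -/
def Gpoly (x y : R) (N : ℕ) : R :=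
  ∑ p ∈ Finset.range (N / 2 + 1), x ^ B (2 * p) * y ^ (N - 2 * p)

/-- `I_N = ∏_{j=1}^{N} (y, x^j)R`. -/
def Iprod (x y : R) (N : ℕ) : Ideal R :=
  ∏ j ∈ Finset.Icc 1 N, Ideal.span {y, x ^ j}

end Dicritical

/-!
`I_N` is generated by the monomials `m_k = x^{B(k)} y^{N-k}`, `0 ≤ k ≤ N`, and `G_N`, `F_N` are
the sums of the `m_k` with `k` even, resp. odd. Since `B(i) + B(j) = B(i+1) + B(j-1) + (j-i-1)`,
every product `m_i m_j` with `j ≥ i + 2` lies in `x I_N²`. A product `m_k m_l` with `l ∈ {k, k+1}`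
is `m_l` times the parity sum through `m_k` (an element of `J_N`) minus products of that kind,
except for the term `m_{k+2} m_{k+1}` when `l = k + 1`, which is handled by descending induction
on `k`. Hence `I_N² ≤ J_N I_N + x I_N²`, and Nakayama's lemma gives `J_N I_N = I_N²` because `x`
lies in the maximal ideal.
-/

namespace Dicritical

open Finset

variable {R : Type*} [CommRing R]

lemma B_succ (n : ℕ) : B (n + 1) = B n + (n + 1) := by
  unfold B
  rw [show (n + 1) * (n + 1 + 1) = n * (n + 1) + (n + 1) * 2 by ring,
    Nat.add_mul_div_right _ _ two_pos]

def gen (x y : R) (N k : ℕ) : R := x ^ B k * y ^ (N - k)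

lemma gen_mul_y (x y : R) {N k : ℕ} (hk : k ≤ N) : gen x y N k * y = gen x y (N + 1) k := by
  rw [gen, gen, show N + 1 - k = N - k + 1 by omega]
  ring

lemma gen_mul_x_pow (x y : R) {N k : ℕ} (hk : k ≤ N) :
    gen x y N k * x ^ (N + 1) = x ^ (N - k) * gen x y (N + 1) (k + 1) := by
  rw [gen, gen, B_succ, show N + 1 - (k + 1) = N - k by omega,
    show N + 1 = N - k + (k + 1) by omega, pow_add, pow_add]
  ring

lemma Iprod_eq_span (x y : R) (N : ℕ) :
    Iprod x y N = Ideal.span (gen x y N '' Set.Iic N) := by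
  induction N with
  | zero => simp [Iprod, gen, B, Set.Iic, Ideal.one_eq_top]
  | succ N ih =>
    rw [Iprod, Finset.prod_Icc_succ_top (by omega), ← Iprod, ih, Ideal.span_mul_span']
    refine le_antisymm (Ideal.span_le.mpr ?_) (Ideal.span_le.mpr ?_)
    · rintro _ ⟨_, ⟨k, hk, rfl⟩, b, hb, rfl⟩
      rw [Set.mem_Iic] at hk
      rcases hb with rfl | rfl
      · exact Ideal.subset_span ⟨k, Set.mem_Iic.mpr (by omega), (gen_mul_y x b hk).symm⟩
      · simp only [SetLike.mem_coe, gen_mul_x_pow x y hk]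
        exact Ideal.mul_mem_left _ _
          (Ideal.subset_span ⟨k + 1, Set.mem_Iic.mpr (by omega), rfl⟩)
    · rintro _ ⟨k, hk, rfl⟩
      apply Ideal.subset_span
      rcases Nat.lt_or_eq_of_le (Set.mem_Iic.mp hk) with hk | rfl
      · exact ⟨_, ⟨k, Set.mem_Iic.mpr (by omega), rfl⟩, y, by simp, gen_mul_y x y (by omega)⟩
      · refine ⟨_, ⟨N, Set.mem_Iic.mpr le_rfl, rfl⟩, x ^ (N + 1), by simp, ?_⟩
        simp [gen_mul_x_pow x y le_rfl]

lemma gen_mem_Iprod (x y : R) {N k : ℕ} (hk : k ≤ N) : gen x y N k ∈ Iprod x y N :=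
  Iprod_eq_span x y N ▸ Ideal.subset_span ⟨k, hk, rfl⟩

lemma Iprod_fg (x y : R) (N : ℕ) : (Iprod x y N).FG :=
  Submodule.fg_def.mpr ⟨_, (Set.finite_Iic N).image _, (Iprod_eq_span x y N).symm⟩

lemma gen_mul_gen_mem_of_add_two_le (x y : R) {N i j : ℕ} (hij : i + 2 ≤ j) (hj : j ≤ N) :
    gen x y N i * gen x y N j ∈ Ideal.span {x} * (Iprod x y N * Iprod x y N) := by
  have hB : B i + B j = (j - i - 1) + (B (i + 1) + B (j - 1)) := by
    have := B_succ (j - 1)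
    rw [Nat.sub_add_cancel (by omega)] at this
    rw [B_succ]
    omega
  have key : gen x y N i * gen x y N j =
      x ^ (j - i - 1) * (gen x y N (i + 1) * gen x y N (j - 1)) := by
    simp only [gen]
    rw [show x ^ B i * y ^ (N - i) * (x ^ B j * y ^ (N - j))
        = x ^ (B i + B j) * y ^ ((N - i) + (N - j)) by ring, hB,
      show N - i + (N - j) = N - (i + 1) + (N - (j - 1)) by omega]
    ring
  rw [key]
  exact Ideal.mul_mem_mul (Ideal.mem_span_singleton.mpr (dvd_pow_self x (by omega)))
    (Ideal.mul_mem_mul (gen_mem_Iprod x y (by omega)) (gen_mem_Iprod x y (by omega)))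

lemma mul_mem_of_sum_mem {ι : Type*} {s : Finset ι} {a : ι → R} {b : R} {k : ι} {K : Ideal R}
    (hk : k ∈ s) (hsum : (∑ j ∈ s, a j) * b ∈ K) (hrest : ∀ j ∈ s, j ≠ k → a j * b ∈ K) :
    a k * b ∈ K := by
  classical
  rw [← Finset.add_sum_erase s a hk, add_mul, Finset.sum_mul] at hsum
  exact (K.add_mem_iff_left (K.sum_mem fun j hj => hrest j (Finset.mem_of_mem_erase hj)
    (Finset.ne_of_mem_erase hj))).mp hsum

section Parity

variable {m : ℕ → R} {N : ℕ} {I J L : Ideal R}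

lemma mul_mem_sup_of_parity {k l : ℕ} (hk : k ≤ N) (hl : m l ∈ I)
    (hJ : ∑ j ∈ (range (N + 1)).filter (· % 2 = k % 2), m j ∈ J)
    (hrest : ∀ j ≤ N, j % 2 = k % 2 → j ≠ k → m j * m l ∈ J * I ⊔ L) :
    m k * m l ∈ J * I ⊔ L :=
  mul_mem_of_sum_mem (s := (range (N + 1)).filter (· % 2 = k % 2))
    (mem_filter.mpr ⟨mem_range.mpr (by omega), rfl⟩)
    (Submodule.mem_sup_left (Ideal.mul_mem_mul hJ hl)) fun j hj hne =>
      have hj := mem_filter.mp hj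
      hrest j (Nat.lt_succ_iff.mp (mem_range.mp hj.1)) hj.2 hne

lemma mul_self_mem_sup (hI : ∀ l ≤ N, m l ∈ I)
    (hJ : ∀ k ≤ N, ∑ j ∈ (range (N + 1)).filter (· % 2 = k % 2), m j ∈ J)
    (hL : ∀ i j, i + 2 ≤ j → j ≤ N → m i * m j ∈ L) {k : ℕ} (hk : k ≤ N) :
    m k * m k ∈ J * I ⊔ L := by
  refine mul_mem_sup_of_parity hk (hI k hk) (hJ k hk) fun j hj hjk hne => ?_
  refine Submodule.mem_sup_right ?_
  rcases Nat.lt_or_gt_of_ne hne with h | h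
  · exact hL j k (by omega) hk
  · exact mul_comm (m k) (m j) ▸ hL k j (by omega) hj

lemma mul_succ_mem_sup (hI : ∀ l ≤ N, m l ∈ I)
    (hJ : ∀ k ≤ N, ∑ j ∈ (range (N + 1)).filter (· % 2 = k % 2), m j ∈ J)
    (hL : ∀ i j, i + 2 ≤ j → j ≤ N → m i * m j ∈ L) (k : ℕ) (hk : k + 1 ≤ N) :
    m k * m (k + 1) ∈ J * I ⊔ L := by
  refine mul_mem_sup_of_parity (by omega) (hI _ hk) (hJ k (by omega)) fun j hj hjk hne => ?_
  rcases Nat.lt_or_gt_of_ne hne with h | h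
  · exact Submodule.mem_sup_right (hL j (k + 1) (by omega) hk)
  · obtain rfl | h := eq_or_lt_of_le (show k + 2 ≤ j by omega)
    · exact mul_comm (m (k + 1)) (m (k + 2)) ▸ mul_succ_mem_sup hI hJ hL (k + 1) hj
    · exact Submodule.mem_sup_right (mul_comm (m (k + 1)) (m j) ▸ hL (k + 1) j (by omega) hj)
termination_by N - k

lemma mul_self_le_sup (hspan : I = Ideal.span (m '' Set.Iic N))
    (hJ : ∀ k ≤ N, ∑ j ∈ (range (N + 1)).filter (· % 2 = k % 2), m j ∈ J)
    (hL : ∀ i j, i + 2 ≤ j → j ≤ N → m i * m j ∈ L) :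
    I * I ≤ J * I ⊔ L := by
  have hI : ∀ l ≤ N, m l ∈ I := fun l hl => hspan ▸ Ideal.subset_span ⟨l, hl, rfl⟩
  have hadj : ∀ k l, k ≤ l → l ≤ N → m k * m l ∈ J * I ⊔ L := by
    intro k l hkl hl
    obtain rfl | rfl | h : l = k ∨ l = k + 1 ∨ k + 2 ≤ l := by omega
    · exact mul_self_mem_sup hI hJ hL hl
    · exact mul_succ_mem_sup hI hJ hL k hl
    · exact Submodule.mem_sup_right (hL k l h hl)
  conv_lhs => rw [hspan]
  rw [Ideal.span_mul_span', Ideal.span_le]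
  rintro _ ⟨_, ⟨k, hk, rfl⟩, _, ⟨l, hl, rfl⟩, rfl⟩
  rcases le_total k l with h | h
  · exact hadj k l h hl
  · dsimp only
    rw [mul_comm (m k)]
    exact hadj l k h hk

end Parity

lemma Gpoly_eq_sum (x y : R) (N : ℕ) :
    Gpoly x y N = ∑ j ∈ (range (N + 1)).filter (· % 2 = 0), gen x y N j := by
  refine sum_nbij' (2 * ·) (· / 2) ?_ ?_ ?_ ?_ fun _ _ => rfl <;>
    simp only [mem_range, mem_filter] <;> omega

lemma Fpoly_eq_sum (x y : R) {N : ℕ} (hN : 0 < N) :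
    Fpoly x y N = ∑ j ∈ (range (N + 1)).filter (· % 2 = 1), gen x y N j := by
  refine sum_nbij' (2 * · + 1) (· / 2) ?_ ?_ ?_ ?_ fun p _ => ?_
  all_goals simp only [mem_range, mem_filter, gen]
  iterate 4 omega
  rw [Nat.sub_sub, add_comm 1]

lemma sum_mod_two_mem_span (x y : R) {N : ℕ} (hN : 0 < N) (k : ℕ) :
    ∑ j ∈ (range (N + 1)).filter (· % 2 = k % 2), gen x y N j
      ∈ Ideal.span {Fpoly x y N, Gpoly x y N} := by
  rcases Nat.mod_two_eq_zero_or_one k with h | h <;> rw [h]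
  · exact Ideal.subset_span (Gpoly_eq_sum x y N ▸ by simp)
  · exact Ideal.subset_span (Fpoly_eq_sum x y hN ▸ by simp)

lemma span_Fpoly_Gpoly_le_Iprod (x y : R) {N : ℕ} (hN : 0 < N) :
    Ideal.span {Fpoly x y N, Gpoly x y N} ≤ Iprod x y N := by
  have hsum (r : ℕ) : ∑ j ∈ (range (N + 1)).filter (· % 2 = r), gen x y N j ∈ Iprod x y N :=
    sum_mem fun j hj => gen_mem_Iprod x y (Nat.lt_succ_iff.mp (mem_range.mp (mem_filter.mp hj).1))
  rw [Ideal.span_le, Set.insert_subset_iff, Set.singleton_subset_iff, Fpoly_eq_sum x y hN,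
    Gpoly_eq_sum]
  exact ⟨hsum 1, hsum 0⟩

end Dicritical

open Dicritical in
theorem stmt19_general (R : Type*) [CommRing R] [IsLocalRing R]
    (x y : R) (hxy : Ideal.span {x, y} = IsLocalRing.maximalIdeal R)
    (N : ℕ) (hN : 0 < N) :
    Ideal.span {Fpoly x y N, Gpoly x y N} ≤ Iprod x y N ∧
    ∃ n : ℕ, Ideal.span {Fpoly x y N, Gpoly x y N} * Iprod x y N ^ n =
      Iprod x y N ^ (n + 1) := by
  have hJI := span_Fpoly_Gpoly_le_Iprod x y hN
  refine ⟨hJI, 1, ?_⟩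
  rw [pow_one, pow_two]
  refine le_antisymm (Ideal.mul_mono_left hJI) ?_
  have hx : Ideal.span {x} ≤ Ideal.jacobson ⊥ := by
    rw [IsLocalRing.jacobson_eq_maximalIdeal ⊥ bot_ne_top, ← hxy]
    exact Ideal.span_mono (Set.singleton_subset_iff.mpr (Set.mem_insert x {y}))
  refine Submodule.le_of_le_smul_of_le_jacobson_bot ((Iprod_fg x y N).mul (Iprod_fg x y N)) hx ?_
  rw [smul_eq_mul]
  exact mul_self_le_sup (Iprod_eq_span x y N) (fun k _ => sum_mod_two_mem_span x y hN k)
    fun _ _ => gen_mul_gen_mem_of_add_two_le x y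

open Dicritical in
/-- Example 5.2, Abhyankar: let `R` be a 2-dimensional Noetherian regular
local domain with maximal ideal `(x, y)R` generated by a regular system of parameters.  For
each `N ≥ 1`, the 2-generated ideal `J_N = (F_N, G_N)R` is a reduction of
`I_N = ∏_{j=1}^{N} (y, x^j)R` (no assumption on the residue field). -/
theorem stmt19 (R : Type*) [CommRing R] [IsDomain R] [IsNoetherianRing R] [IsLocalRing R]
    (hdim : ringKrullDim R = 2)
    (x y : R) (hxy : Ideal.span {x, y} = IsLocalRing.maximalIdeal R)
    (N : ℕ) (hN : 0 < N) :
    Ideal.span {Fpoly x y N, Gpoly x y N} ≤ Iprod x y N ∧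
    ∃ n : ℕ, Ideal.span {Fpoly x y N, Gpoly x y N} * Iprod x y N ^ n =
      Iprod x y N ^ (n + 1) :=
  stmt19_general R x y hxy N hN
end
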